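/- Let m and k be positive integers whose k-th cascade representation has leading term n_k > k, and let m = Σ_{i=0}^{s} C(a_{k-i}, k-i)_{n_k-1-i} be the (n_k-1)-colored Turán representation of m in degree k. Suppose that s ≤ 1, or that s = 2 and a_{k-2} = k-2. Then there exists a finite simple graph G with c_k(G) = m and c_{k+1}(G) = smbd_k(m) = Σ_{i=0}^{s} C(a_{k-i}, k-i+1)_{n_k-1-i}. -/

import Mathlib

/-- The number of `n`-cliques (sets of `n` pairwise-adjacent vertices) of a finite simple graph. -/
noncomputable def cliqueCount {V : Type*} [Fintype V] (G : SimpleGraph V) (n : ℕ) : ℕ :=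
  Set.ncard {t : Finset V | G.IsNClique n t}

/-- `a i` stands for `n_{k-i}`: the sequence `(n_k, …, n_{k-s})` is admissible for `k` iff
`n_k > n_{k-1} > … > n_{k-s} ≥ k-s > 0`. -/
def Admissible (k s : ℕ) (a : ℕ → ℕ) : Prop :=
  s < k ∧ (∀ i < s, a (i + 1) < a i) ∧ k - s ≤ a s

/-- The `k`-th cascade representation `m = Σ_{i=0}^{s} C(n_{k-i}, k-i)` with
`n_k > n_{k-1} > … > n_{k-s} ≥ k-s > 0`; `n i` stands for `n_{k-i}`. -/
def CascadeRep (m k s : ℕ) (n : ℕ → ℕ) : Prop :=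
  Admissible k s n ∧ m = ∑ i ∈ Finset.range (s + 1), (n i).choose (k - i)

/-- `C(n, k)_r`: the number of `k`-cliques of the Turán graph `T_{n,r}`. -/
noncomputable def turanC (n k r : ℕ) : ℕ := cliqueCount (SimpleGraph.turanGraph n r) k

/-- The `r`-colored Turán representation of `m` in degree `k`:
`m = Σ_{i=0}^{s} C(n_{k-i}, k-i)_{r-i}` with `n_{k-i} - ⌊n_{k-i}/(r-i)⌋ > n_{k-i-1}` for
`0 ≤ i < s` and `n_{k-s} ≥ k-s > 0`; `a i` stands for `n_{k-i}`. -/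
def ColoredRep (m k r s : ℕ) (a : ℕ → ℕ) : Prop :=
  s < k ∧ (∀ i < s, a (i + 1) < a i - a i / (r - i)) ∧ k - s ≤ a s ∧
  m = ∑ i ∈ Finset.range (s + 1), turanC (a i) (k - i) (r - i)

/-!
Joining a new vertex to the vertex set of an induced copy of `H` inside `G` raises the number
of `(j + 1)`-cliques by `c_j(H)`. Deleting a smallest part of `T(a, r + 1)` leaves
`T(a - ⌊a/(r+1)⌋, r)`, so the gap condition of the colored representation makes
`T(a_{k-1}, n_k - 2)` an induced subgraph of `T(a_k, n_k - 1)`; one new vertex over it realises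
`s = 1`. When `s = 2` and `a_{k-2} = k - 2`, the last term is `C(k-2, k-2) = 1` in degree `k` and
`0` in degree `k + 1`, which is what a second new vertex joined to a `(k - 1)`-clique adds.
-/

open Finset

namespace Nat

theorem add_div_mod_succ {r : ℕ} (hr : 0 < r) (x : ℕ) : (x + x / r) % (r + 1) = x % r := by
  have hx : x + x / r = x % r + (r + 1) * (x / r) := by linarith [Nat.mod_add_div x r]
  rw [hx, Nat.add_mul_mod_self_left, Nat.mod_eq_of_lt ((Nat.mod_lt x hr).trans (by omega))]

theorem add_div_lt_of_lt_sub_div {a r x : ℕ} (hr : 0 < r) (hx : x < a - a / (r + 1)) :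
    x + x / r < a := by
  have hxa : x + a / (r + 1) + 1 ≤ a := by omega
  have hq : x / r ≤ a / (r + 1) := by
    refine Nat.lt_succ_iff.1 ((Nat.div_lt_iff_lt_mul hr).2 ?_)
    have := Nat.div_add_mod a (r + 1)
    have := Nat.mod_lt a (Nat.succ_pos r)
    nlinarith
  omega

end Nat

namespace SimpleGraph

variable {V W : Type*}

lemma cliqueCount_pos_iff [Fintype V] {G : SimpleGraph V} {n : ℕ} :
    0 < cliqueCount G n ↔ ¬G.CliqueFree n := by
  rw [cliqueCount, Set.ncard_pos (Set.toFinite _)]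
  simp [Set.Nonempty, CliqueFree]

lemma cliqueCount_top [Fintype V] (n : ℕ) :
    cliqueCount (⊤ : SimpleGraph V) n = (Fintype.card V).choose n := by
  classical
  have : {t : Finset V | (⊤ : SimpleGraph V).IsNClique n t} =
      ↑(powersetCard n (univ : Finset V)) := by
    ext t
    simp [isNClique_iff, IsClique.top]
  rw [cliqueCount, this, Set.ncard_coe_finset, card_powersetCard, card_univ]

lemma cliqueCount_map_equiv [Fintype V] [Fintype W] (G : SimpleGraph V) (e : V ≃ W) (n : ℕ) :
    cliqueCount (G.map e) n = cliqueCount G n := by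
  change ((G.map e).cliqueSet n).ncard = (G.cliqueSet n).ncard
  rw [cliqueSet_map_of_equiv, Set.ncard_image_of_injective _ (Finset.map_injective _)]

lemma exists_fin_cliqueCount_eq [Fintype V] (G : SimpleGraph V) :
    ∃ (N : ℕ) (G' : SimpleGraph (Fin N)), ∀ n, cliqueCount G' n = cliqueCount G n :=
  ⟨_, G.map (Fintype.equivFin V), cliqueCount_map_equiv G _⟩

section Embedding

variable {G : SimpleGraph V} {H : SimpleGraph W} (φ : H ↪g G) {n : ℕ} {t : Finset W}

lemma Embedding.isClique_map_iff : G.IsClique (t.map φ.toEmbedding : Set V) ↔ H.IsClique t := by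
  have hadj : Function.onFun G.Adj φ.toEmbedding = H.Adj :=
    funext₂ fun _ _ ↦ propext φ.map_adj_iff
  rw [IsClique, coe_map, φ.toEmbedding.injective.injOn.pairwise_image, hadj]

lemma Embedding.isNClique_map_iff : G.IsNClique n (t.map φ.toEmbedding) ↔ H.IsNClique n t := by
  rw [isNClique_iff, isNClique_iff, φ.isClique_map_iff, card_map]

lemma ncard_isNClique_subset_range [Fintype W] :
    {t | G.IsNClique n t ∧ ↑t ⊆ Set.range φ}.ncard = cliqueCount H n := by
  classical
  have : {t | G.IsNClique n t ∧ ↑t ⊆ Set.range φ} = map φ.toEmbedding '' H.cliqueSet n := by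
    ext t
    constructor
    · rintro ⟨ht, hsub⟩
      rw [← Set.image_univ, subset_set_image_iff] at hsub
      obtain ⟨t, -, rfl⟩ := hsub
      rw [show t.image φ = t.map φ.toEmbedding from (map_eq_image _ _).symm] at ht ⊢
      exact ⟨t, φ.isNClique_map_iff.1 ht, rfl⟩
    · rintro ⟨t, ht, rfl⟩
      exact ⟨φ.isNClique_map_iff.2 ht, coe_map_subset_range _ _⟩
  rw [this, Set.ncard_image_of_injective _ (Finset.map_injective _)]
  rfl

end Embedding

def addApex (G : SimpleGraph V) (S : Set V) : SimpleGraph (Option V) where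
  Adj
    | some x, some y => G.Adj x y
    | some x, none | none, some x => x ∈ S
    | none, none => False
  symm := ⟨by rintro (_ | x) (_ | y) h <;> first | exact h | exact h.symm⟩
  loopless := ⟨by rintro (_ | x) h <;> first | exact h | exact G.irrefl h⟩

section addApex

variable (G : SimpleGraph V) (S : Set V)

def embeddingAddApex : G ↪g G.addApex S := ⟨.some, Iff.rfl⟩

lemma isClique_addApex_map_some_iff {t : Finset V} :
    (G.addApex S).IsClique (t.map .some : Set (Option V)) ↔ G.IsClique t :=
  (G.embeddingAddApex S).isClique_map_iff

lemma isNClique_addApex_map_some_iff {n : ℕ} {t : Finset V} :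
    (G.addApex S).IsNClique n (t.map .some) ↔ G.IsNClique n t :=
  (G.embeddingAddApex S).isNClique_map_iff

lemma isNClique_addApex_insertNone_iff {n : ℕ} {t : Finset V} :
    (G.addApex S).IsNClique (n + 1) (insertNone t) ↔ G.IsNClique n t ∧ ↑t ⊆ S := by
  have hcoe : (insertNone t : Set (Option V)) = insert none ↑(t.map .some) := by
    ext (_ | x) <;> simp
  rw [isNClique_iff, isNClique_iff, hcoe, isClique_insert, card_insertNone,
    isClique_addApex_map_some_iff]
  simp [Set.subset_def, addApex]
  tauto

lemma cliqueSet_addApex_succ (n : ℕ) :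
    (G.addApex S).cliqueSet (n + 1) =
      map .some '' G.cliqueSet (n + 1) ∪ insertNone '' {t | G.IsNClique n t ∧ ↑t ⊆ S} := by
  classical
  have hne (t t' : Finset V) : insertNone t ≠ t'.map .some := by
    intro h
    have := h ▸ none_mem_insertNone (s := t)
    simp at this
  ext u
  obtain ⟨t, rfl | rfl⟩ : ∃ t, u = t.map .some ∨ u = insertNone t := by
    refine ⟨u.eraseNone, ?_⟩
    by_cases h : none ∈ u
    · rw [insertNone_eraseNone, insert_eq_of_mem h]
      exact .inr rfl
    · rw [map_some_eraseNone, erase_eq_of_notMem h]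
      exact .inl rfl
  · simp [isNClique_addApex_map_some_iff, hne]
  · simp [isNClique_addApex_insertNone_iff, fun t' : Finset V ↦ (hne t t').symm]

lemma cliqueCount_addApex_succ [Fintype V] (n : ℕ) :
    cliqueCount (G.addApex S) (n + 1) =
      cliqueCount G (n + 1) + {t | G.IsNClique n t ∧ ↑t ⊆ S}.ncard := by
  have hdisj : Disjoint (map .some '' G.cliqueSet (n + 1))
      (insertNone '' {t | G.IsNClique n t ∧ ↑t ⊆ S}) := by
    refine Set.disjoint_left.2 ?_
    rintro _ ⟨t, -, rfl⟩ ⟨t', -, h⟩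
    have := h ▸ none_mem_insertNone (s := t')
    simp at this
  change ((G.addApex S).cliqueSet (n + 1)).ncard = (G.cliqueSet (n + 1)).ncard + _
  rw [cliqueSet_addApex_succ, Set.ncard_union_eq hdisj,
    Set.ncard_image_of_injective _ (Finset.map_injective _),
    Set.ncard_image_of_injective _ insertNone.injective]

end addApex

lemma cliqueCount_addApex_range [Fintype V] [Fintype W] {G : SimpleGraph V}
    {H : SimpleGraph W} (φ : H ↪g G) (n : ℕ) :
    cliqueCount (G.addApex (Set.range φ)) (n + 1) = cliqueCount G (n + 1) + cliqueCount H n := by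
  rw [cliqueCount_addApex_succ, ncard_isNClique_subset_range]

lemma exists_cliqueCount_succ_eq_add_choose [Fintype V] {G : SimpleGraph V} {N : ℕ}
    (h : ¬G.CliqueFree N) :
    ∃ G' : SimpleGraph (Option V),
      ∀ n, cliqueCount G' (n + 1) = cliqueCount G (n + 1) + N.choose n :=
  ⟨G.addApex (Set.range (topEmbeddingOfNotCliqueFree h)), fun n ↦ by
    rw [cliqueCount_addApex_range, cliqueCount_top, Fintype.card_fin]⟩

lemma not_cliqueFree_turanGraph {a r N : ℕ} (ha : N ≤ a) (hr : N ≤ r) :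
    ¬(turanGraph a r).CliqueFree N := by
  refine IsNClique.not_cliqueFree (s := univ.map (Fin.castLEEmb ha)) ⟨?_, by simp⟩
  simp only [coe_map, coe_univ, Set.image_univ]
  rintro _ ⟨x, rfl⟩ _ ⟨y, rfl⟩ hxy
  rw [turanGraph_adj]
  simp only [Fin.castLEEmb_apply, Fin.val_castLE, Nat.mod_eq_of_lt (x.2.trans_le hr),
    Nat.mod_eq_of_lt (y.2.trans_le hr)]
  exact fun h ↦ hxy (congrArg _ (Fin.ext h))

/-- `x ↦ x + ⌊x / r⌋` enumerates the vertices outside the residue class `r` mod `r + 1`,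
a smallest part of `T(a, r + 1)`. -/
def turanGraphEmbedding {a b r : ℕ} (hr : 0 < r) (hb : b ≤ a - a / (r + 1)) :
    turanGraph b r ↪g turanGraph a (r + 1) where
  toFun x := ⟨x + x / r, Nat.add_div_lt_of_lt_sub_div hr (x.2.trans_le hb)⟩
  inj' x y h := Fin.ext <| StrictMono.injective
    (fun u v huv ↦ add_lt_add_of_lt_of_le huv (Nat.div_le_div_right huv.le)) (congrArg Fin.val h)
  map_rel_iff' {x y} := by
    change (x + x / r : ℕ) % (r + 1) ≠ (y + y / r) % (r + 1) ↔ _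
    rw [Nat.add_div_mod_succ hr, Nat.add_div_mod_succ hr]
    rfl

end SimpleGraph

section TuranC

open SimpleGraph

variable {a b r N : ℕ}

lemma turanC_eq_choose (n : ℕ) (h : a ≤ r) : turanC a n r = a.choose n := by
  rw [turanC, turanGraph_eq_top.2 (.inr h), cliqueCount_top, Fintype.card_fin]

lemma exists_cliqueCount_succ_eq_turanC_add_turanC (hr : 0 < r) (hb : b ≤ a - a / (r + 1)) :
    ∃ G : SimpleGraph (Option (Fin a)),
      ∀ n, cliqueCount G (n + 1) = turanC a (n + 1) (r + 1) + turanC b n r :=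
  ⟨(turanGraph a (r + 1)).addApex (Set.range (turanGraphEmbedding hr hb)),
    cliqueCount_addApex_range _⟩

lemma exists_cliqueCount_succ_eq_turanC_add_turanC_add_choose (hr : 0 < r)
    (hb : b ≤ a - a / (r + 1)) (ha : N ≤ a) (hN : N ≤ r + 1) :
    ∃ G : SimpleGraph (Option (Option (Fin a))),
      ∀ n, cliqueCount G (n + 1) = turanC a (n + 1) (r + 1) + turanC b n r + N.choose n := by
  obtain ⟨G, hG⟩ := exists_cliqueCount_succ_eq_turanC_add_turanC hr hb
  have hclique : ¬G.CliqueFree N := by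
    obtain _ | N := N
    · exact not_cliqueFree_zero
    rw [← cliqueCount_pos_iff, hG]
    exact Nat.add_pos_left (cliqueCount_pos_iff.2 (not_cliqueFree_turanGraph ha hN)) _
  obtain ⟨G', hG'⟩ := exists_cliqueCount_succ_eq_add_choose hclique
  exact ⟨G', fun n ↦ by rw [hG', hG]⟩

end TuranC

theorem construction_three_general (m k : ℕ) (n : ℕ → ℕ) (hnk : k < n 0)
    (s : ℕ) (a : ℕ → ℕ) (hcol : ColoredRep m k (n 0 - 1) s a)
    (hcond : s ≤ 1 ∨ (s = 2 ∧ a 2 = k - 2)) :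
    ∃ (nv : ℕ) (G : SimpleGraph (Fin nv)),
      cliqueCount G k = m ∧
      cliqueCount G (k + 1) =
        ∑ i ∈ Finset.range (s + 1), turanC (a i) (k - i + 1) (n 0 - 1 - i) := by
  obtain ⟨hsk, hgap, -, rfl⟩ := hcol
  have hkr : k ≤ n 0 - 1 := by omega
  generalize n 0 - 1 = r at *
  suffices ∃ (V : Type) (_ : Fintype V) (G : SimpleGraph V),
      cliqueCount G k = ∑ i ∈ range (s + 1), turanC (a i) (k - i) (r - i) ∧
      cliqueCount G (k + 1) = ∑ i ∈ range (s + 1), turanC (a i) (k - i + 1) (r - i) by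
    obtain ⟨V, _, G, hk, hk1⟩ := this
    obtain ⟨N, G', hG'⟩ := SimpleGraph.exists_fin_cliqueCount_eq G
    exact ⟨N, G', (hG' k).trans hk, (hG' _).trans hk1⟩
  rcases hcond with hs | ⟨rfl, hak⟩
  · interval_cases s
    · refine ⟨_, inferInstance, SimpleGraph.turanGraph (a 0) r, ?_, ?_⟩ <;> simp [turanC]
    obtain ⟨k, rfl⟩ : ∃ k', k = k' + 1 := ⟨k - 1, by omega⟩
    obtain ⟨r, rfl⟩ : ∃ r', r = r' + 1 := ⟨r - 1, by omega⟩
    obtain ⟨G, hG⟩ := exists_cliqueCount_succ_eq_turanC_add_turanC (a := a 0) (b := a 1)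
      (r := r) (by omega) (by simpa using (hgap 0 one_pos).le)
    refine ⟨_, inferInstance, G, ?_, ?_⟩ <;> simp [sum_range_succ, hG]
  · obtain ⟨k, rfl⟩ : ∃ k', k = k' + 2 := ⟨k - 2, by omega⟩
    obtain ⟨r, rfl⟩ : ∃ r', r = r' + 2 := ⟨r - 2, by omega⟩
    have hgap0 : a 1 < a 0 - a 0 / (r + 2) := hgap 0 (by norm_num)
    have ha0 : a 1 < a 0 := hgap0.trans_le (Nat.sub_le _ _)
    have ha1 : a 2 < a 1 := (hgap 1 (by norm_num)).trans_le (Nat.sub_le _ _)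
    obtain ⟨G, hG⟩ := exists_cliqueCount_succ_eq_turanC_add_turanC_add_choose (a := a 0)
      (b := a 1) (r := r + 1) (N := k + 1) (by omega) hgap0.le (by omega) (by omega)
    refine ⟨_, inferInstance, G, ?_, ?_⟩ <;>
      simp [sum_range_succ, hG, show a 2 = k by omega, turanC_eq_choose _ (show k ≤ r by omega)]

/-- Construction 3: for `m, k > 0` whose `k`-th cascade representation has leading term
`n_k > k`, with `(n_k - 1)`-colored Turán representation
`m = Σ_{i=0}^{s} C(a_{k-i}, k-i)_{n_k-1-i}`, if `s ≤ 1` or (`s = 2` and `a_{k-2} = k-2`),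
then there is a finite simple graph `G` with `c_k(G) = m` and
`c_{k+1}(G) = smbd_k(m) = Σ_{i=0}^{s} C(a_{k-i}, k-i+1)_{n_k-1-i}`. -/
theorem construction_three (m k s0 : ℕ) (n : ℕ → ℕ) (hm : 0 < m) (hk : 0 < k)
    (hcasc : CascadeRep m k s0 n) (hnk : k < n 0)
    (s : ℕ) (a : ℕ → ℕ) (hcol : ColoredRep m k (n 0 - 1) s a)
    (hcond : s ≤ 1 ∨ (s = 2 ∧ a 2 = k - 2)) :
    ∃ (nv : ℕ) (G : SimpleGraph (Fin nv)),
      cliqueCount G k = m ∧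
      cliqueCount G (k + 1) =
        ∑ i ∈ Finset.range (s + 1), turanC (a i) (k - i + 1) (n 0 - 1 - i) :=
  construction_three_general m k n hnk s a hcol hcond
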